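/- arXiv:1703.05062 — 4 statements merged into one kernel-verified Lean document; each statement's English description precedes it below -/
import Mathlib

section
/- Let E be a subset of F_q^n of cardinality N, with n ≥ 2, and let μ = N/q^(n-2). For a plane H chosen uniformly at random, E[|E ∩ H|^2] ≤ μ + μ^2. -/
/-!
Expanding `|E ∩ H|²` as a sum over pairs, `∑_H |E ∩ H|² = ∑_{x, y ∈ E} c(x, y)`, where `c(x, y)`
counts the `k`-flats through `x` and `y`. Affine automorphisms permute the `k`-flats and act
transitively on points and on pairs of distinct points, so `c(x, x) = c₁` and `c(x, y) = c₂`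
for `x ≠ y` are constants. Taking `E = V` (with `|V| = Q`, `T` flats of `q^k` points each) gives
`Q c₁ = T q^k` and `Q c₁ + Q (Q - 1) c₂ = T q^{2k}`; since `c₂ ≤ c₁` the latter yields
`Q² c₂ ≤ T q^{2k}`. Hence `∑_H |E ∩ H|² ≤ N c₁ + N² c₂ ≤ (μ + μ²) T` with `μ = N q^k / Q`.
-/

open Module Finset

variable {F V : Type*} [Field F] [AddCommGroup V] [Module F V]

theorem LinearEquiv.exists_apply_eq {u w : V} (hu : u ≠ 0) (hw : w ≠ 0) :
    ∃ g : V ≃ₗ[F] V, g u = w := by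
  obtain ⟨g, hg⟩ := Submodule.exists_linearEquiv_restrict_eq
    ((toSpanNonzeroSingleton F V u hu).symm ≪≫ₗ toSpanNonzeroSingleton F V w hw)
  have := hg (toSpanNonzeroSingleton F V u hu 1)
  rw [LinearEquiv.trans_apply, LinearEquiv.symm_apply_apply] at this
  exact ⟨g, by simpa using this.symm⟩

theorem AffineEquiv.exists_apply_eq_and_apply_eq {x y x' y' : V} (h : x ≠ y) (h' : x' ≠ y') :
    ∃ e : V ≃ᵃ[F] V, e x = x' ∧ e y = y' := by
  obtain ⟨g, hg⟩ := LinearEquiv.exists_apply_eq (F := F) (sub_ne_zero.2 h.symm)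
    (sub_ne_zero.2 h'.symm)
  refine ⟨((AffineEquiv.constVAdd F V (-x)).trans g.toAffineEquiv).trans
    (AffineEquiv.constVAdd F V x'), ?_, ?_⟩
  · simp
  · simp [neg_add_eq_sub, hg]

theorem AffineSubspace.finrank_direction_map_affineEquiv (e : V ≃ᵃ[F] V)
    (H : AffineSubspace F V) :
    finrank F (H.map (e : V →ᵃ[F] V)).direction = finrank F H.direction := by
  rw [map_direction, AffineEquiv.linear_toAffineMap, LinearEquiv.finrank_map_eq]

-- For `k = 0` this includes the empty subspace `⊥`.
variable (F V) in
abbrev AffineFlat (k : ℕ) := {H : AffineSubspace F V // finrank F H.direction = k}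

namespace AffineFlat

variable {k : ℕ}

def map (e : V ≃ᵃ[F] V) : AffineFlat F V k ≃ AffineFlat F V k where
  toFun H := ⟨H.1.map e, by rw [H.1.finrank_direction_map_affineEquiv, H.2]⟩
  invFun H := ⟨H.1.map e.symm, by rw [H.1.finrank_direction_map_affineEquiv, H.2]⟩
  left_inv H := Subtype.ext <| AffineSubspace.coe_injective <| by
    simp [Set.preimage_image_eq _ e.injective]
  right_inv H := Subtype.ext <| AffineSubspace.coe_injective <| by
    simp [Set.image_preimage_eq _ e.surjective]

theorem apply_mem_map {e : V ≃ᵃ[F] V} {H : AffineFlat F V k} {x : V} :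
    e x ∈ (map e H).1 ↔ x ∈ H.1 :=
  AffineSubspace.mem_map_iff_mem_of_injective e.injective

theorem card_coe [Fintype F] [Finite V] (hk : k ≠ 0) (H : AffineFlat F V k) :
    Nat.card H.1 = Fintype.card F ^ k := by
  have : Nonempty H.1 := Set.Nonempty.to_subtype <| (AffineSubspace.nonempty_iff_ne_bot _).2
    fun h ↦ hk (by rw [← H.2, h, AffineSubspace.direction_bot, finrank_bot])
  rw [← Nat.card_congr (Equiv.vaddConst (Classical.arbitrary H.1)),
    Module.natCard_eq_pow_finrank (K := F), H.2, Nat.card_eq_fintype_card]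

variable [Fintype V]

instance : Finite (AffineSubspace F V) := Finite.of_injective _ SetLike.coe_injective

noncomputable instance : Fintype (AffineFlat F V k) := Fintype.ofFinite _

open scoped Classical

variable (F k) in
noncomputable def numThrough (x y : V) : ℕ := #{H : AffineFlat F V k | x ∈ H.1 ∧ y ∈ H.1}

theorem numThrough_map (e : V ≃ᵃ[F] V) (x y : V) :
    numThrough F k (e x) (e y) = numThrough F k x y :=
  (card_equiv (map e) fun H ↦ by simp [apply_mem_map]).symm

theorem numThrough_self_eq (x y : V) : numThrough F k x x = numThrough F k y y := by
  simpa using (numThrough_map (k := k) (AffineEquiv.constVAdd F V (y - x)) x x).symm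

theorem numThrough_eq_of_ne {x y x' y' : V} (h : x ≠ y) (h' : x' ≠ y') :
    numThrough F k x y = numThrough F k x' y' := by
  obtain ⟨e, rfl, rfl⟩ := AffineEquiv.exists_apply_eq_and_apply_eq (F := F) h h'
  exact (numThrough_map e x y).symm

theorem numThrough_le_self (x y : V) : numThrough F k x y ≤ numThrough F k x x :=
  card_le_card (monotone_filter_right _ fun _ _ h ↦ ⟨h.1, h.1⟩)

theorem sum_card_filter_mem (S : Finset V) :
    ∑ H : AffineFlat F V k, #{x ∈ S | x ∈ H.1} = ∑ x ∈ S, numThrough F k x x := by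
  simp only [card_filter, numThrough, and_self]
  exact sum_comm

theorem sum_card_filter_mem_sq (S : Finset V) :
    ∑ H : AffineFlat F V k, #{x ∈ S | x ∈ H.1} ^ 2 = ∑ x ∈ S, ∑ y ∈ S, numThrough F k x y := by
  simp only [card_filter, sq, sum_mul_sum, numThrough, ite_zero_mul_ite_zero, mul_one]
  rw [sum_comm]
  exact sum_congr rfl fun x _ ↦ sum_comm

theorem sum_numThrough_self (S : Finset V) :
    ∑ x ∈ S, numThrough F k x x = #S * numThrough F k (0 : V) 0 := by
  rw [sum_congr rfl fun x (_ : x ∈ S) ↦ numThrough_self_eq x 0, sum_const, smul_eq_mul]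

theorem sum_sum_numThrough (S : Finset V) {v : V} (hv : v ≠ 0) :
    ∑ x ∈ S, ∑ y ∈ S, numThrough F k x y =
      #S * numThrough F k (0 : V) 0 + #S * (#S - 1) * numThrough F k 0 v := by
  have row (x : V) (hx : x ∈ S) :
      ∑ y ∈ S, numThrough F k x y = numThrough F k (0 : V) 0 + (#S - 1) * numThrough F k 0 v := by
    rw [← add_sum_erase S _ hx, numThrough_self_eq x 0,
      sum_congr rfl fun y hy ↦ numThrough_eq_of_ne (ne_of_mem_erase hy).symm hv.symm,
      sum_const, card_erase_of_mem hx, smul_eq_mul]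
  rw [sum_congr rfl row, sum_const, smul_eq_mul]
  ring

theorem sum_card_filter_mem_sq_le (S : Finset V) {v : V} (hv : v ≠ 0) :
    ∑ H : AffineFlat F V k, #{x ∈ S | x ∈ H.1} ^ 2 ≤
      #S * numThrough F k (0 : V) 0 + #S ^ 2 * numThrough F k 0 v := by
  rw [sum_card_filter_mem_sq, sum_sum_numThrough S hv, sq]
  gcongr
  exact Nat.sub_le _ _

variable [Fintype F]

theorem card_filter_mem_univ (hk : k ≠ 0) (H : AffineFlat F V k) :
    #{x : V | x ∈ H.1} = Fintype.card F ^ k := by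
  rw [← card_coe hk H, Nat.card_eq_fintype_card, Fintype.card_subtype]

theorem card_mul_numThrough_self (hk : k ≠ 0) :
    Fintype.card V * numThrough F k (0 : V) 0 =
      Fintype.card (AffineFlat F V k) * Fintype.card F ^ k := by
  have h := sum_card_filter_mem (F := F) (k := k) (univ : Finset V)
  rw [sum_numThrough_self, sum_congr rfl fun H _ ↦ card_filter_mem_univ hk H, sum_const,
    card_univ, card_univ, smul_eq_mul] at h
  exact h.symm

theorem card_sq_mul_numThrough_le (hk : k ≠ 0) {v : V} (hv : v ≠ 0) :
    Fintype.card V ^ 2 * numThrough F k 0 v ≤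
      Fintype.card (AffineFlat F V k) * (Fintype.card F ^ k) ^ 2 := by
  have h := sum_card_filter_mem_sq (F := F) (k := k) (univ : Finset V)
  rw [sum_sum_numThrough _ hv, sum_congr rfl fun H _ ↦ by rw [card_filter_mem_univ hk H],
    sum_const, card_univ, card_univ, smul_eq_mul] at h
  generalize Fintype.card V = Q at h ⊢
  have hQ : Q ^ 2 = Q * (Q - 1) + Q := by
    rw [sq, Nat.mul_sub_one, Nat.sub_add_cancel (Nat.le_mul_self Q)]
  calc Q ^ 2 * numThrough F k 0 v
        = Q * (Q - 1) * numThrough F k 0 v + Q * numThrough F k 0 v := by rw [hQ, add_mul]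
    _ ≤ Q * (Q - 1) * numThrough F k 0 v + Q * numThrough F k (0 : V) 0 := by
        gcongr; exact numThrough_le_self 0 v
    _ = _ := by rw [h]; ring

theorem sum_card_filter_mem_sq_div_le [Nontrivial V] (hk : k ≠ 0) (S : Finset V) :
    (∑ H : AffineFlat F V k, (#{x ∈ S | x ∈ H.1} : ℝ) ^ 2) / Fintype.card (AffineFlat F V k) ≤
      #S * Fintype.card F ^ k / Fintype.card V +
        (#S * Fintype.card F ^ k / Fintype.card V) ^ 2 := by
  obtain ⟨v, hv⟩ := exists_ne (0 : V)
  set μ : ℝ := #S * Fintype.card F ^ k / Fintype.card V with hμ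
  have hsum : ∑ H : AffineFlat F V k, (#{x ∈ S | x ∈ H.1} : ℝ) ^ 2 ≤
      #S * numThrough F k (0 : V) 0 + #S ^ 2 * numThrough F k 0 v := by
    exact_mod_cast sum_card_filter_mem_sq_le S hv
  have h₁ : (Fintype.card V : ℝ) * numThrough F k (0 : V) 0 =
      Fintype.card (AffineFlat F V k) * Fintype.card F ^ k := by
    exact_mod_cast card_mul_numThrough_self hk
  have h₂ : (Fintype.card V : ℝ) ^ 2 * numThrough F k 0 v ≤
      Fintype.card (AffineFlat F V k) * (Fintype.card F ^ k) ^ 2 := by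
    exact_mod_cast card_sq_mul_numThrough_le hk hv
  set T : ℝ := (Fintype.card (AffineFlat F V k) : ℝ)
  refine div_le_of_le_mul₀ (by positivity) (by positivity) (hsum.trans ?_)
  have e₁ : (#S : ℝ) * numThrough F k (0 : V) 0 = μ * T := by
    rw [hμ]; field_simp; linear_combination (#S : ℝ) * h₁
  have e₂ : (#S : ℝ) ^ 2 * numThrough F k 0 v ≤ μ ^ 2 * T := by
    rw [hμ, div_pow, mul_pow, div_mul_eq_mul_div, le_div_iff₀ (by positivity)]
    nlinarith [h₂, sq_nonneg (#S : ℝ)]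
  linarith

end AffineFlat

/-- For `E ⊆ F_q^n` with `|E| = N`, `μ = N/q^(n-2)`, and a plane `H` chosen uniformly
at random among all planes of `F_q^n`, we have `E[|E ∩ H|²] ≤ μ + μ²`. -/
theorem stmt_7 (F : Type) [Field F] [Fintype F] (n : ℕ) (hn : 2 ≤ n)
    (E : Set (Fin n → F)) (N : ℕ) (hN : Nat.card E = N) (μ : ℝ)
    (hμ : μ = (N : ℝ) / (Fintype.card F : ℝ) ^ (n - 2)) :
    (∑ᶠ H : {H : AffineSubspace F (Fin n → F) // Module.finrank F H.direction = 2},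
        (Nat.card (E ∩ (H.1 : Set (Fin n → F)) : Set (Fin n → F)) : ℝ) ^ 2) /
      (Nat.card {H : AffineSubspace F (Fin n → F) // Module.finrank F H.direction = 2} : ℝ)
      ≤ μ + μ ^ 2 := by
  classical
  have : Nonempty (Fin n) := ⟨⟨0, by omega⟩⟩
  have hcard (H : AffineFlat F (Fin n → F) 2) :
      Nat.card (E ∩ (H.1 : Set (Fin n → F)) : Set (Fin n → F)) = #{x ∈ E.toFinset | x ∈ H.1} := by
    rw [Nat.card_eq_fintype_card, ← Set.toFinset_card]
    congr 1; ext; simp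
  have hμ' : μ = #E.toFinset * Fintype.card F ^ 2 / Fintype.card (Fin n → F) := by
    rw [hμ, ← hN, Nat.card_eq_card_toFinset, Fintype.card_fun, Fintype.card_fin]
    have hqn : (Fintype.card F : ℝ) ^ n = Fintype.card F ^ (n - 2) * Fintype.card F ^ 2 := by
      rw [← pow_add, Nat.sub_add_cancel hn]
    push_cast
    rw [hqn]
    field_simp
  rw [finsum_eq_sum_of_fintype, Nat.card_eq_fintype_card, hμ']
  simp only [hcard]
  exact AffineFlat.sum_card_filter_mem_sq_div_le two_ne_zero E.toFinset
end

section
/- Let E ⊆ F_q^n with |E| = N and n ≥ 2, and let t be a real number with 0 < t < N/q^(n-2). Then the proportion of planes H in F_q^n with |E ∩ H| ≤ t is at most (N/q^(n-2)) / (N/q^(n-2) − t)^2. -/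
/-!
Let `G` be the number of `k`-dimensional linear subspaces of `V`. Each point lies on exactly `G`
`k`-flats, so `|E ∩ H|` has mean `μ = |E| q^k / |V|` over the `k`-flats `H`. Since the linear
automorphisms of `V` act transitively on nonzero vectors, any two distinct points lie on a common
number `c` of `k`-flats, and counting the flats through one point together with their remaining
points gives `c (|V| - 1) = G (q^k - 1)`, hence `c |V| ≤ G q^k`. Thus the events `x ∈ H`, `y ∈ H`
are negatively correlated, which bounds the variance of `|E ∩ H|` by its mean `μ`; Chebyshev's
inequality does the rest.
-/

open Finset Module

theorem exists_linearEquiv_apply_eq {K V : Type*} [DivisionRing K] [AddCommGroup V] [Module K V]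
    {v w : V} (hv : v ≠ 0) (hw : w ≠ 0) : ∃ g : V ≃ₗ[K] V, g v = w := by
  obtain ⟨g, hg⟩ := Submodule.exists_linearEquiv_restrict_eq
    (LinearEquiv.coord K V v hv ≪≫ₗ LinearEquiv.toSpanNonzeroSingleton K V w hw)
  refine ⟨g, ?_⟩
  simpa [LinearEquiv.coord_self] using (hg ⟨v, Submodule.mem_span_singleton_self v⟩).symm

theorem sum_card_filter_sq {ι α : Type*} (s : Finset ι) (E : Finset α) (r : ι → α → Prop)
    [∀ i x, Decidable (r i x)] :
    ∑ i ∈ s, #{x ∈ E | r i x} ^ 2 = ∑ x ∈ E, ∑ y ∈ E, #{i ∈ s | r i x ∧ r i y} := by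
  simp only [sq, card_filter, sum_mul_sum, ← ite_and, mul_ite, mul_one, mul_zero]
  rw [sum_comm]
  refine sum_congr rfl fun x _ => ?_
  rw [sum_comm]
  exact sum_congr rfl fun y _ => sum_congr rfl fun i _ => by simp only [and_comm]

theorem card_filter_le_mul_sq_le {ι : Type*} (s : Finset ι) (f : ι → ℝ) {μ t : ℝ} (ht : t ≤ μ) :
    #{i ∈ s | f i ≤ t} * (μ - t) ^ 2 ≤ ∑ i ∈ s, (f i - μ) ^ 2 := by
  calc #{i ∈ s | f i ≤ t} * (μ - t) ^ 2 = ∑ i ∈ s with f i ≤ t, (μ - t) ^ 2 := by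
        rw [sum_const, nsmul_eq_mul]
    _ ≤ ∑ i ∈ s with f i ≤ t, (f i - μ) ^ 2 := by
        refine sum_le_sum fun i hi => ?_
        have := (mem_filter.1 hi).2
        nlinarith
    _ ≤ ∑ i ∈ s, (f i - μ) ^ 2 :=
        sum_le_sum_of_subset_of_nonneg (filter_subset _ _) fun _ _ _ => sq_nonneg _

open scoped Classical

section

variable {F V : Type*} [Field F] [AddCommGroup V] [Module F V] [Fintype V]

noncomputable instance : Fintype (Submodule F V) := Fintype.ofFinite _
noncomputable instance : Fintype (AffineSubspace F V) := Fintype.ofFinite _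

variable (F V) in
noncomputable def flats (k : ℕ) : Finset (AffineSubspace F V) := {H | finrank F H.direction = k}

variable (F V) in
noncomputable def subspaces (k : ℕ) : Finset (Submodule F V) := {W | finrank F W = k}

theorem card_flats_filter_mem (k : ℕ) (x : V) (p : Submodule F V → Prop) :
    #{H ∈ flats F V k | x ∈ H ∧ p H.direction} = #{W ∈ subspaces F V k | p W} := by
  refine card_nbij' AffineSubspace.direction (AffineSubspace.mk' x) ?_ ?_ ?_ ?_ <;>
    intro H hH <;> simp_all [flats, subspaces, AffineSubspace.direction_mk']
  rw [AffineSubspace.direction_mk']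
  exact hH.1

theorem card_flats_mem (k : ℕ) (x : V) :
    #{H ∈ flats F V k | x ∈ H} = #(subspaces F V k) := by
  simpa using card_flats_filter_mem k x fun _ => True

theorem card_flats_mem_mem (k : ℕ) {x : V} (y : V) :
    #{H ∈ flats F V k | x ∈ H ∧ y ∈ H} = #{W ∈ subspaces F V k | y - x ∈ W} := by
  rw [← card_flats_filter_mem k x]
  congr 1
  refine filter_congr fun H _ => and_congr_right fun hx => ?_
  rw [← vsub_eq_sub, AffineSubspace.vsub_right_mem_direction_iff_mem hx]

theorem card_subspaces_filter_mem_eq {k : ℕ} {v w : V} (hv : v ≠ 0) (hw : w ≠ 0) :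
    #{W ∈ subspaces F V k | v ∈ W} = #{W ∈ subspaces F V k | w ∈ W} := by
  obtain ⟨g, rfl⟩ := exists_linearEquiv_apply_eq (K := F) hv hw
  refine card_nbij' (Submodule.map (g : V →ₗ[F] V)) (Submodule.map (g.symm : V →ₗ[F] V))
    ?_ ?_ ?_ ?_ <;>
    intro W hW <;> simp_all [subspaces, LinearEquiv.finrank_map_eq, Submodule.mem_map_equiv]
  · exact (Submodule.map_symm_eq_iff g).2 rfl
  · exact (Submodule.map_symm_eq_iff g).1 rfl

theorem sum_card_inter_flats (k : ℕ) (E : Finset V) :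
    ∑ H ∈ flats F V k, #{x ∈ E | x ∈ H} = #E * #(subspaces F V k) := by
  have := sum_card_bipartiteAbove_eq_sum_card_bipartiteBelow (s := flats F V k) (t := E)
    fun H x => x ∈ H
  simpa only [bipartiteAbove, bipartiteBelow, card_flats_mem, sum_const, smul_eq_mul] using this

variable [Fintype F]

theorem card_filter_mem_affineSubspace {H : AffineSubspace F V} (hH : (H : Set V).Nonempty) :
    #{x | x ∈ H} = Fintype.card F ^ finrank F H.direction := by
  have : Nonempty H := hH.to_subtype
  rw [← card_eq_pow_finrank, ← Fintype.card_subtype]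
  exact Fintype.card_congr (Equiv.vaddConst (Classical.arbitrary H)).symm

theorem card_flats_mul (k : ℕ) (hk : 0 < k) :
    #(flats F V k) * Fintype.card F ^ k = Fintype.card V * #(subspaces F V k) := by
  refine card_mul_eq_card_mul (fun H x => x ∈ H) (fun H hH => ?_) fun x _ => card_flats_mem k x
  have hdir : finrank F H.direction = k := (mem_filter.1 hH).2
  have hne : (H : Set V).Nonempty := by
    rw [AffineSubspace.nonempty_iff_ne_bot]
    rintro rfl
    rw [AffineSubspace.direction_bot, finrank_bot] at hdir
    omega
  rw [← hdir]
  exact card_filter_mem_affineSubspace hne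

theorem card_flats_mem_mem_mul {k : ℕ} {x y : V} (hxy : x ≠ y) :
    #{H ∈ flats F V k | x ∈ H ∧ y ∈ H} * (Fintype.card V - 1)
      = #(subspaces F V k) * (Fintype.card F ^ k - 1) := by
  have hbelow : ∀ z ∈ univ.erase x, #{H ∈ {H ∈ flats F V k | x ∈ H} | z ∈ H}
      = #{H ∈ flats F V k | x ∈ H ∧ y ∈ H} := by
    intro z hz
    rw [filter_filter, card_flats_mem_mem, card_flats_mem_mem]
    exact card_subspaces_filter_mem_eq (sub_ne_zero.2 (ne_of_mem_erase hz))
      (sub_ne_zero.2 hxy.symm)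
  have habove : ∀ H ∈ {H ∈ flats F V k | x ∈ H}, #{z ∈ univ.erase x | z ∈ H}
      = Fintype.card F ^ k - 1 := by
    intro H hH
    obtain ⟨hdir, hx⟩ := mem_filter.1 hH
    rw [filter_erase, card_erase_of_mem (by simpa using hx),
      card_filter_mem_affineSubspace ⟨x, hx⟩, (mem_filter.1 hdir).2]
  have := card_mul_eq_card_mul (fun H z => z ∈ H) habove hbelow
  rw [card_flats_mem, card_erase_of_mem (mem_univ x), card_univ] at this
  rw [this, mul_comm]

theorem card_flats_mem_mem_mul_le {k : ℕ} (hk : 0 < k) (hkV : k ≤ finrank F V) {x y : V}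
    (hxy : x ≠ y) :
    #{H ∈ flats F V k | x ∈ H ∧ y ∈ H} * Fintype.card V
      ≤ #(subspaces F V k) * Fintype.card F ^ k := by
  have hq : 2 ≤ Fintype.card F := Fintype.one_lt_card
  have hQ : 2 ≤ Fintype.card F ^ k := le_self_pow₀ (by omega) hk.ne' |>.trans' hq
  have hQV : Fintype.card F ^ k ≤ Fintype.card V := by
    rw [Module.card_eq_pow_finrank (K := F) (V := V)]
    exact Nat.pow_le_pow_right (by omega) hkV
  have h := card_flats_mem_mem_mul (F := F) (k := k) hxy
  set c := #{H ∈ flats F V k | x ∈ H ∧ y ∈ H}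
  zify [hQ.trans' one_le_two, hQ.trans' one_le_two |>.trans hQV] at h hQ hQV ⊢
  nlinarith

theorem sum_sq_card_inter_flats_mul_le {k : ℕ} (hk : 0 < k) (hkV : k ≤ finrank F V)
    (E : Finset V) :
    (∑ H ∈ flats F V k, #{x ∈ E | x ∈ H} ^ 2) * Fintype.card V
      ≤ (#E * Fintype.card V + #E ^ 2 * Fintype.card F ^ k) * #(subspaces F V k) := by
  set G := #(subspaces F V k)
  have hrow : ∀ x ∈ E, (∑ y ∈ E, #{H ∈ flats F V k | x ∈ H ∧ y ∈ H}) * Fintype.card V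
      ≤ G * Fintype.card V + #E * (G * Fintype.card F ^ k) := by
    intro x hx
    rw [← add_sum_erase E _ hx, add_mul, sum_mul]
    gcongr ?_ + ?_
    · simp [card_flats_mem, G]
    · calc ∑ y ∈ E.erase x, #{H ∈ flats F V k | x ∈ H ∧ y ∈ H} * Fintype.card V
          ≤ ∑ y ∈ E.erase x, G * Fintype.card F ^ k :=
            sum_le_sum fun y hy => card_flats_mem_mem_mul_le hk hkV (ne_of_mem_erase hy).symm
        _ ≤ #E * (G * Fintype.card F ^ k) := by
            rw [sum_const, smul_eq_mul]
            exact Nat.mul_le_mul_right _ card_erase_le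
  rw [sum_card_filter_sq, sum_mul]
  calc _ ≤ ∑ x ∈ E, (G * Fintype.card V + #E * (G * Fintype.card F ^ k)) := sum_le_sum hrow
    _ = _ := by rw [sum_const, smul_eq_mul]; ring

theorem sum_sq_card_inter_flats_sub_mean_le {k : ℕ} (hk : 0 < k) (hkV : k ≤ finrank F V)
    (E : Finset V) :
    ∑ H ∈ flats F V k, ((#{x ∈ E | x ∈ H} : ℝ) - #E * Fintype.card F ^ k / Fintype.card V) ^ 2
      ≤ #(flats F V k) * (#E * Fintype.card F ^ k / Fintype.card V) := by
  have h1 : ∑ H ∈ flats F V k, (#{x ∈ E | x ∈ H} : ℝ) = #E * #(subspaces F V k) := by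
    exact_mod_cast sum_card_inter_flats k E
  have h2 : (∑ H ∈ flats F V k, (#{x ∈ E | x ∈ H} : ℝ) ^ 2) * Fintype.card V
      ≤ (#E * Fintype.card V + #E ^ 2 * Fintype.card F ^ k) * #(subspaces F V k) := by
    exact_mod_cast sum_sq_card_inter_flats_mul_le hk hkV E
  have h3 : (#(flats F V k) : ℝ) * Fintype.card F ^ k = Fintype.card V * #(subspaces F V k) := by
    exact_mod_cast card_flats_mul k hk
  have hV : (0 : ℝ) < Fintype.card V := by exact_mod_cast Fintype.card_pos
  set μ : ℝ := #E * Fintype.card F ^ k / Fintype.card V with hμ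
  have hPμ : #(flats F V k) * μ = #E * #(subspaces F V k) := by
    rw [hμ]
    field_simp
    linear_combination (#E : ℝ) * h3
  have h2' : ∑ H ∈ flats F V k, (#{x ∈ E | x ∈ H} : ℝ) ^ 2
      ≤ #E * #(subspaces F V k) + #E * #(subspaces F V k) * μ := by
    rw [← le_div_iff₀ hV] at h2
    refine h2.trans_eq ?_
    rw [hμ]
    field_simp
  simp only [sub_sq, sum_add_distrib, sum_sub_distrib, ← sum_mul, ← mul_sum, sum_const,
    nsmul_eq_mul, h1]
  have hPμ2 : #(flats F V k) * μ ^ 2 = #E * #(subspaces F V k) * μ := by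
    rw [sq, ← mul_assoc, hPμ]
  linarith

theorem card_filter_flats_div_card_le {k : ℕ} (hk : 0 < k) (hkV : k ≤ finrank F V)
    (E : Finset V) {t : ℝ} (ht : t < #E * Fintype.card F ^ k / Fintype.card V) :
    (#{H ∈ flats F V k | (#{x ∈ E | x ∈ H} : ℝ) ≤ t} : ℝ) / #(flats F V k)
      ≤ (#E * Fintype.card F ^ k / Fintype.card V)
          / (#E * Fintype.card F ^ k / Fintype.card V - t) ^ 2 := by
  have hmean : 0 < #E * Fintype.card F ^ k / Fintype.card V - t := sub_pos.2 ht
  have hcheb := (card_filter_le_mul_sq_le (flats F V k) (fun H => (#{x ∈ E | x ∈ H} : ℝ))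
    ht.le).trans (sum_sq_card_inter_flats_sub_mean_le hk hkV E)
  rcases (Nat.cast_nonneg (α := ℝ) #(flats F V k)).eq_or_lt with hP | hP
  · rw [← hP, div_zero]
    positivity
  · rw [div_le_div_iff₀ hP (by positivity)]
    linarith

end

theorem stmt_8_general (F : Type) [Field F] [Fintype F] (n : ℕ) (hn : 2 ≤ n)
    (E : Set (Fin n → F)) (N : ℕ) (hN : Nat.card E = N) (t : ℝ)
    (ht : t < (N : ℝ) / (Fintype.card F : ℝ) ^ (n - 2)) :
    (Nat.card {H : AffineSubspace F (Fin n → F) //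
          Module.finrank F H.direction = 2 ∧
            (Nat.card (E ∩ (H : Set (Fin n → F)) : Set (Fin n → F)) : ℝ) ≤ t} : ℝ) /
      (Nat.card {H : AffineSubspace F (Fin n → F) // Module.finrank F H.direction = 2} : ℝ)
      ≤ ((N : ℝ) / (Fintype.card F : ℝ) ^ (n - 2)) /
          ((N : ℝ) / (Fintype.card F : ℝ) ^ (n - 2) - t) ^ 2 := by
  have hμ : (#E.toFinset : ℝ) * Fintype.card F ^ 2 / Fintype.card (Fin n → F)
      = N / (Fintype.card F : ℝ) ^ (n - 2) := by
    rw [Set.toFinset_card, ← Nat.card_eq_fintype_card, hN, Fintype.card_fun, Fintype.card_fin,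
      Nat.cast_pow, ← Nat.sub_add_cancel hn, pow_add, Nat.add_sub_cancel]
    have : (Fintype.card F : ℝ) ≠ 0 := by positivity
    field_simp
  have hinter : ∀ H : AffineSubspace F (Fin n → F),
      Nat.card (E ∩ (H : Set (Fin n → F)) : Set (Fin n → F)) = #{x ∈ E.toFinset | x ∈ H} := by
    intro H
    rw [Nat.card_eq_card_toFinset, Set.toFinset_inter]
    congr 1
    ext x
    simp
  simp only [hinter]
  simp only [Nat.card_eq_fintype_card, Fintype.card_subtype, ← hμ]
  have := card_filter_flats_div_card_le (F := F) two_pos ((Module.finrank_fin_fun F).symm ▸ hn)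
    E.toFinset (hμ ▸ ht)
  simpa only [flats, filter_filter] using this

/-- Chebyshev consequence: for `E ⊆ F_q^n` with `|E| = N` and `0 < t < N/q^(n-2)`,
the proportion of planes `H` with `|E ∩ H| ≤ t` is at most
`(N/q^(n-2)) / (N/q^(n-2) − t)²`. -/
theorem stmt_8 (F : Type) [Field F] [Fintype F] (n : ℕ) (hn : 2 ≤ n)
    (E : Set (Fin n → F)) (N : ℕ) (hN : Nat.card E = N) (t : ℝ)
    (ht0 : 0 < t) (ht : t < (N : ℝ) / (Fintype.card F : ℝ) ^ (n - 2)) :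
    (Nat.card {H : AffineSubspace F (Fin n → F) //
          Module.finrank F H.direction = 2 ∧
            (Nat.card (E ∩ (H : Set (Fin n → F)) : Set (Fin n → F)) : ℝ) ≤ t} : ℝ) /
      (Nat.card {H : AffineSubspace F (Fin n → F) // Module.finrank F H.direction = 2} : ℝ)
      ≤ ((N : ℝ) / (Fintype.card F : ℝ) ^ (n - 2)) /
          ((N : ℝ) / (Fintype.card F : ℝ) ^ (n - 2) - t) ^ 2 :=
  stmt_8_general F n hn E N hN t ht
end

section
/- Let X ⊂ A^n be an absolutely irreducible hypersurface of degree d over F_q and H a plane over F_q with H ⊄ X. Then |(X ∩ H)(F_q)| ≤ max((d−1)q + (d²−d−2)√q + 2d−1, dq). In particular, if (d²−d−2)√q + 2d−1 ≤ q, then |(X ∩ H)(F_q)| ≤ dq. -/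
/-!
Already `d q` bounds the count, and `d q ≤ max(…, d q)`. Restricting `f` to the plane
`(s, t) ↦ p + s u + t v` gives a polynomial in two variables; it is nonzero because `H ⊄ X`,
and its total degree is at most `d` because the substitution is affine. By the
Schwartz–Zippel lemma it has at most `d q` zeros in `F_q²`.
-/

open MvPolynomial Finset

namespace MvPolynomial

theorem totalDegree_aeval_le_of_forall_totalDegree_le_one {σ τ R : Type*} [CommSemiring R]
    {φ : σ → MvPolynomial τ R} (hφ : ∀ i, (φ i).totalDegree ≤ 1)
    (f : MvPolynomial σ R) :
    (aeval φ f).totalDegree ≤ f.totalDegree := by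
  conv_lhs => rw [f.as_sum, map_sum]
  refine totalDegree_finsetSum_le fun s hs => ?_
  rw [aeval_monomial, algebraMap_eq]
  calc (C (coeff s f) * s.prod fun i k => φ i ^ k).totalDegree
      ≤ (∏ i ∈ s.support, φ i ^ s i).totalDegree :=
        (totalDegree_mul _ _).trans (by rw [totalDegree_C, zero_add]; rfl)
    _ ≤ ∑ i ∈ s.support, s i * (φ i).totalDegree :=
        (totalDegree_finsetProd _ _).trans (sum_le_sum fun i _ => totalDegree_pow _ _)
    _ ≤ ∑ i ∈ s.support, s i :=
        sum_le_sum fun i _ => by simpa using Nat.mul_le_mul_left (s i) (hφ i)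
    _ ≤ f.totalDegree := le_totalDegree hs

theorem card_zeros_le_totalDegree_mul {R : Type*} [CommRing R] [IsDomain R] [Fintype R]
    [DecidableEq R] {n : ℕ} {g : MvPolynomial (Fin (n + 1)) R} (hg : g ≠ 0) :
    #{x | eval x g = 0} ≤ g.totalDegree * Fintype.card R ^ n := by
  have hq : (0 : ℚ≥0) < Fintype.card R := by exact_mod_cast Fintype.card_pos
  have := schwartz_zippel_totalDegree hg (univ : Finset R)
  rw [Fintype.piFinset_univ, card_univ, div_le_div_iff₀ (by positivity) hq, pow_succ,
    ← mul_assoc, mul_le_mul_iff_left₀ hq] at this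
  exact_mod_cast this

end MvPolynomial

section PlaneSection

variable {R : Type*} [CommRing R] {n : ℕ}

noncomputable def planeParam (p u v : Fin n → R) : Fin n → MvPolynomial (Fin 2) R :=
  fun i => C (p i) + X 0 * C (u i) + X 1 * C (v i)

theorem totalDegree_planeParam_le (p u v : Fin n → R) (i : Fin n) :
    (planeParam p u v i).totalDegree ≤ 1 := by
  unfold planeParam
  have hXC (j : Fin 2) (c : R) : (X j * C c : MvPolynomial (Fin 2) R).totalDegree ≤ 1 := by
    rw [mul_comm, C_mul_X_eq_monomial]; exact (totalDegree_monomial_le _ _).trans (by simp)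
  exact (totalDegree_add _ _).trans
    (max_le ((totalDegree_add _ _).trans (max_le (by simp) (hXC 0 _))) (hXC 1 _))

theorem eval_aeval_planeParam (p u v : Fin n → R) (f : MvPolynomial (Fin n) R) (x : Fin 2 → R) :
    eval x (aeval (planeParam p u v) f) = eval (p + x 0 • u + x 1 • v) f := by
  change aeval x (aeval _ f) = aeval _ f
  rw [comp_aeval_apply]
  congr 1
  ext i
  simp [planeParam]

theorem card_planeSection_le [IsDomain R] [Fintype R] (p u v : Fin n → R)
    {f : MvPolynomial (Fin n) R} (hf : aeval (planeParam p u v) f ≠ 0) :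
    Nat.card {st : R × R // eval (p + st.1 • u + st.2 • v) f = 0}
      ≤ f.totalDegree * Fintype.card R := by
  classical
  calc Nat.card {st : R × R // eval (p + st.1 • u + st.2 • v) f = 0}
      = #{x : Fin 2 → R | eval x (aeval (planeParam p u v) f) = 0} := by
        rw [← Fintype.card_subtype, ← Nat.card_eq_fintype_card]
        refine Nat.card_congr ((finTwoArrowEquiv R).symm.subtypeEquiv fun st => ?_)
        rw [finTwoArrowEquiv_symm_apply, eval_aeval_planeParam]; rfl
    _ ≤ (aeval (planeParam p u v) f).totalDegree * Fintype.card R ^ 1 :=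
        card_zeros_le_totalDegree_mul hf
    _ ≤ f.totalDegree * Fintype.card R := by
        rw [pow_one]
        gcongr
        exact totalDegree_aeval_le_of_forall_totalDegree_le_one (totalDegree_planeParam_le p u v) f

end PlaneSection

theorem stmt_14_general (F : Type) [Field F] [Fintype F] (n d : ℕ)
    (f : MvPolynomial (Fin n) F)
    (hdeg : f.totalDegree = d)
    (p u v : Fin n → F)
    (hHX : (MvPolynomial.aeval
        (fun i => MvPolynomial.C (p i) + MvPolynomial.X 0 * MvPolynomial.C (u i)
          + MvPolynomial.X 1 * MvPolynomial.C (v i)) f : MvPolynomial (Fin 2) F) ≠ 0) :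
    (Nat.card {st : F × F // MvPolynomial.eval (p + st.1 • u + st.2 • v) f = 0} : ℝ)
      ≤ max (((d : ℝ) - 1) * (Fintype.card F : ℝ)
            + ((d : ℝ) ^ 2 - d - 2) * Real.sqrt (Fintype.card F) + 2 * d - 1)
          ((d : ℝ) * (Fintype.card F : ℝ)) ∧
    (((d : ℝ) ^ 2 - d - 2) * Real.sqrt (Fintype.card F) + 2 * d - 1 ≤ (Fintype.card F : ℝ) →
      (Nat.card {st : F × F // MvPolynomial.eval (p + st.1 • u + st.2 • v) f = 0} : ℝ)
        ≤ (d : ℝ) * (Fintype.card F : ℝ)) := by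
  have hbound : (Nat.card {st : F × F // eval (p + st.1 • u + st.2 • v) f = 0} : ℝ)
      ≤ d * Fintype.card F := by
    rw [← hdeg]
    exact_mod_cast card_planeSection_le p u v hHX
  exact ⟨hbound.trans (le_max_right _ _), fun _ => hbound⟩

/-- For an absolutely irreducible hypersurface `X = {f = 0}` of degree `d` in `A^n`
over `F_q` and a plane `H = {p + s•u + t•v}` not contained in `X` (i.e. the restriction
of `f` to `H` is a nonzero polynomial in two variables), we have
`|(X ∩ H)(F_q)| ≤ max((d−1)q + (d²−d−2)√q + 2d−1, dq)`; in particular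
`|(X ∩ H)(F_q)| ≤ dq` provided `(d²−d−2)√q + 2d−1 ≤ q`. -/
theorem stmt_14 (F : Type) [Field F] [Fintype F] (n d : ℕ) (hn : 3 ≤ n)
    (f : MvPolynomial (Fin n) F)
    (hirr : Irreducible (MvPolynomial.map (algebraMap F (AlgebraicClosure F)) f))
    (hdeg : f.totalDegree = d)
    (p u v : Fin n → F) (huv : LinearIndependent F ![u, v])
    (hHX : (MvPolynomial.aeval
        (fun i => MvPolynomial.C (p i) + MvPolynomial.X 0 * MvPolynomial.C (u i)
          + MvPolynomial.X 1 * MvPolynomial.C (v i)) f : MvPolynomial (Fin 2) F) ≠ 0) :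
    (Nat.card {st : F × F // MvPolynomial.eval (p + st.1 • u + st.2 • v) f = 0} : ℝ)
      ≤ max (((d : ℝ) - 1) * (Fintype.card F : ℝ)
            + ((d : ℝ) ^ 2 - d - 2) * Real.sqrt (Fintype.card F) + 2 * d - 1)
          ((d : ℝ) * (Fintype.card F : ℝ)) ∧
    (((d : ℝ) ^ 2 - d - 2) * Real.sqrt (Fintype.card F) + 2 * d - 1 ≤ (Fintype.card F : ℝ) →
      (Nat.card {st : F × F // MvPolynomial.eval (p + st.1 • u + st.2 • v) f = 0} : ℝ)
        ≤ (d : ℝ) * (Fintype.card F : ℝ)) :=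
  stmt_14_general F n d f hdeg p u v hHX
end

section
/- Let N, q, d, n be as follows: n ≥ 3, q a prime power, d ≥ 1, and 0 < α < 1, e > 0 reals with eα² > 1. Suppose N/q^(n-2) − d²/4 > α·N/q^(n-2) (which follows from N > d²q^(n-2)/(4(1−α))), and suppose that the proportion p of 'bad' planes satisfies p ≤ (N/q^(n-2))/((N/q^(n-2) − d²/4)²), and that N/q^(n-2) ≥ (1−p)(q − (d−1)(d−2)√q − d − 1). If additionally N > e·q^(n-2)/(eα²−1), then N > q^(n-1) − (d−1)(d−2)q^(n-3/2) − (d+1+e)q^(n-2). -/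
/-!
Write `M = N / q^(n-2)` and `S = q - (d-1)(d-2)√q - d - 1`. Since `(M - d²/4)² > (αM)²`,
the Chebyshev bound gives `p ≤ 1 / (α²M)`, and `N > e q^(n-2) / (eα² - 1)` reads
`M (eα² - 1) > e`, which forces `α²M > 1`. The dichotomy bound then yields
`S ≤ M / (1 - p) ≤ α²M² / (α²M - 1) < M + e`, and multiplying `S - e < M` by `q^(n-2)`
gives the claim.
-/

lemma mul_sq_mul_le_one_of_le_div_sq {p α M c : ℝ} (hα : 0 < α) (hM : 0 < M)
    (h : α * M < M - c) (hpM : p ≤ M / (M - c) ^ 2) : p * (α ^ 2 * M) ≤ 1 := by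
  have hsq : (α * M) ^ 2 < (M - c) ^ 2 := pow_lt_pow_left₀ h (by positivity) two_ne_zero
  calc p * (α ^ 2 * M) ≤ M / (M - c) ^ 2 * (α ^ 2 * M) :=
        mul_le_mul_of_nonneg_right hpM (by positivity)
    _ ≤ M / (α * M) ^ 2 * (α ^ 2 * M) := by gcongr
    _ = 1 := by field_simp

lemma pos_of_lt_mul_sub_one {e α M : ℝ} (he : 0 < e) (heα : 1 < e * α ^ 2)
    (h : e < M * (e * α ^ 2 - 1)) : 0 < M :=
  pos_of_mul_pos_left (he.trans h) (by linarith)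

lemma one_lt_sq_mul_of_lt_mul_sub_one {e α M : ℝ} (he : 0 < e) (heα : 1 < e * α ^ 2)
    (h : e < M * (e * α ^ 2 - 1)) : 1 < α ^ 2 * M := by
  have hM := pos_of_lt_mul_sub_one he heα h
  by_contra! hle
  nlinarith [mul_le_of_le_one_right he.le hle]

lemma lt_add_of_one_sub_mul_le {p α e M S : ℝ} (he : 0 < e) (hM : 0 < M)
    (hA : 1 < α ^ 2 * M) (hp : p * (α ^ 2 * M) ≤ 1) (hS : (1 - p) * S ≤ M)
    (h : e < M * (e * α ^ 2 - 1)) : S < M + e := by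
  rcases le_or_gt S 0 with hS0 | hS0
  · linarith
  -- `S (α²M - 1) ≤ (1 - p) S · α²M ≤ α²M · M`, and `α²M · M < (M + e)(α²M - 1)` is `h`
  have hle : S * (α ^ 2 * M - 1) ≤ α ^ 2 * M * M := by
    linarith [mul_le_mul_of_nonneg_right hp hS0.le,
      mul_le_mul_of_nonneg_right hS (by linarith : (0 : ℝ) ≤ α ^ 2 * M)]
  have hlt : α ^ 2 * M * M < (M + e) * (α ^ 2 * M - 1) := by linarith
  exact lt_of_mul_lt_mul_right (hle.trans_lt hlt) (by linarith)

lemma Real.rpow_natCast_sub_three_halves {x : ℝ} (hx : 0 ≤ x) {n : ℕ} (hn : 2 ≤ n) :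
    x ^ ((n : ℝ) - 3 / 2) = √x * x ^ (n - 2) := by
  have hexp : (n : ℝ) - 3 / 2 = 1 / 2 + ((n - 2 : ℕ) : ℝ) := by
    rw [Nat.cast_sub hn]
    ring
  rw [hexp, Real.rpow_add' hx (by positivity), Real.rpow_natCast, ← Real.sqrt_eq_rpow]

theorem stmt_16_general (n q d : ℕ) (hn : 3 ≤ n) (hq : IsPrimePow q)
    (N : ℕ) (α e p : ℝ) (hα0 : 0 < α) (he : 0 < e)
    (heα : 1 < e * α ^ 2)
    (h1 : (N : ℝ) / (q : ℝ) ^ (n - 2) - (d : ℝ) ^ 2 / 4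
      > α * ((N : ℝ) / (q : ℝ) ^ (n - 2)))
    (h2 : p ≤ ((N : ℝ) / (q : ℝ) ^ (n - 2)) /
      ((N : ℝ) / (q : ℝ) ^ (n - 2) - (d : ℝ) ^ 2 / 4) ^ 2)
    (h3 : (N : ℝ) / (q : ℝ) ^ (n - 2) ≥
      (1 - p) * ((q : ℝ) - ((d : ℝ) - 1) * ((d : ℝ) - 2) * Real.sqrt q - d - 1))
    (h4 : (N : ℝ) > e * (q : ℝ) ^ (n - 2) / (e * α ^ 2 - 1)) :
    (N : ℝ) > (q : ℝ) ^ (n - 1)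
      - ((d : ℝ) - 1) * ((d : ℝ) - 2) * (q : ℝ) ^ ((n : ℝ) - 3 / 2)
      - ((d : ℝ) + 1 + e) * (q : ℝ) ^ (n - 2) := by
  have hq0 : (0 : ℝ) < q := by exact_mod_cast hq.pos
  have hQ : (0 : ℝ) < (q : ℝ) ^ (n - 2) := by positivity
  have hMe : e < N / (q : ℝ) ^ (n - 2) * (e * α ^ 2 - 1) := by
    rw [gt_iff_lt, div_lt_iff₀ (by linarith)] at h4
    rwa [div_mul_eq_mul_div, lt_div_iff₀ hQ]
  have hM := pos_of_lt_mul_sub_one he heα hMe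
  have hp := mul_sq_mul_le_one_of_le_div_sq hα0 hM h1 h2
  have hA := one_lt_sq_mul_of_lt_mul_sub_one he heα hMe
  have key := lt_add_of_one_sub_mul_le he hM hA hp h3 hMe
  have hkey := mul_lt_mul_of_pos_right key hQ
  rw [add_mul, div_mul_cancel₀ _ hQ.ne'] at hkey
  rw [Real.rpow_natCast_sub_three_halves hq0.le (by omega),
    show n - 1 = n - 2 + 1 by omega, pow_succ']
  linarith

/-- Arithmetic core of the lower forbidden-interval theorem. Here `N = #X(F_q)` and
`p` is the proportion of bad planes; the hypotheses encode the Chebyshev bound and the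
dichotomy lemma. -/
theorem stmt_16 (n q d : ℕ) (hn : 3 ≤ n) (hq : IsPrimePow q) (hd : 1 ≤ d)
    (N : ℕ) (α e p : ℝ) (hα0 : 0 < α) (hα1 : α < 1) (he : 0 < e)
    (heα : 1 < e * α ^ 2) (hp0 : 0 ≤ p) (hp1 : p ≤ 1)
    (h1 : (N : ℝ) / (q : ℝ) ^ (n - 2) - (d : ℝ) ^ 2 / 4
      > α * ((N : ℝ) / (q : ℝ) ^ (n - 2)))
    (h2 : p ≤ ((N : ℝ) / (q : ℝ) ^ (n - 2)) /
      ((N : ℝ) / (q : ℝ) ^ (n - 2) - (d : ℝ) ^ 2 / 4) ^ 2)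
    (h3 : (N : ℝ) / (q : ℝ) ^ (n - 2) ≥
      (1 - p) * ((q : ℝ) - ((d : ℝ) - 1) * ((d : ℝ) - 2) * Real.sqrt q - d - 1))
    (h4 : (N : ℝ) > e * (q : ℝ) ^ (n - 2) / (e * α ^ 2 - 1)) :
    (N : ℝ) > (q : ℝ) ^ (n - 1)
      - ((d : ℝ) - 1) * ((d : ℝ) - 2) * (q : ℝ) ^ ((n : ℝ) - 3 / 2)
      - ((d : ℝ) + 1 + e) * (q : ℝ) ^ (n - 2) :=
  stmt_16_general n q d hn hq N α e p hα0 he heα h1 h2 h3 h4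
end
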